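/- Let N > 1 be an integer, α > 0, b ≤ 0 < c, and ε > 0. The initial value problem ψ'(r) = (1+ψ(r)²)·[ (c/√(1+ψ(r)²) − b)^{1/α}·√(1+ψ(r)²) − ((N−1)/(r+ε))·ψ(r) ] for r ≥ 0, ψ(0) = 0, has a unique solution ψ_ε on a maximal existence interval [0, R^ε_∞), and ψ_ε(r) > 0 and ψ_ε'(r) > 0 for all r ∈ (0, R^ε_∞). Moreover: if b = 0 then R^ε_∞ = ∞; if b < 0 then (c−b)^{−1/α} ≤ R^ε_∞ ≤ (−b)^{−1/α}·(N + ln 2) < ∞, and ψ_ε(r) → ∞ as r → R^ε_∞⁻. -/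

import Mathlib

/-!
The field `regField` is `C¹` on `[0, ∞) × ℝ`, so Picard–Lindelöf gives local solutions, unique by
Grönwall; gluing them yields a maximal solution on `[0, R)`, and when `R < ∞` it is unbounded near
`R` because bounded solutions continue. The field equals `(c - b)^{1/α} > 0` at `ψ = 0`, so `ψ > 0`;
at a first zero of `ψ'` one would have `ψ'' = (N-1)(1+ψ²)ψ/(r+ε)² > 0`, so `ψ' > 0`.
The bounds on `R` come from the sine of the slope angle, `w = ψ/√(1+ψ²) ∈ [0, 1)`, which solves
`w' = (c/√(1+ψ²) - b)^{1/α} - (N-1)w/(r+ε)`. Comparison gives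
`(-b)^{1/α} r/N ≤ w ≤ (c-b)^{1/α} r`: the left inequality forces `R ≤ N(-b)^{-1/α}`, the right one
keeps `ψ` bounded while `r < (c-b)^{-1/α}`. For `b = 0` the driving term is `o(ψ)` while the
damping is of order `ψ`, so `ψ` stays below a constant barrier on bounded intervals and `R = ∞`.
-/

open Set Filter Topology

/-- `ψ`, with derivative `ψ'`, solves the ε-regularized translating-profile equation
`ψ' = (1+ψ²)·[(c/√(1+ψ²) − b)^{1/α}·√(1+ψ²) − ((N−1)/(r+ε))·ψ]` on the set `J`,
with `ψ(0) = 0`. -/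
def IsRegSolOn (N : ℕ) (α b c ε : ℝ) (J : Set ℝ) (ψ ψ' : ℝ → ℝ) : Prop :=
  ψ 0 = 0 ∧
  (∀ r ∈ J, HasDerivWithinAt ψ (ψ' r) J r) ∧
  (∀ r ∈ J,
    ψ' r = (1 + ψ r ^ 2) *
      ((c / Real.sqrt (1 + ψ r ^ 2) - b) ^ (1 / α) * Real.sqrt (1 + ψ r ^ 2)
        - (((N : ℝ) - 1) / (r + ε)) * ψ r))

open Function

lemma HasDerivWithinAt.of_eqOn_inter_nhds {f g : ℝ → ℝ} {s t u : Set ℝ} {x d : ℝ}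
    (hf : HasDerivWithinAt f d t x) (hu : u ∈ 𝓝 x) (hst : s ∩ u ⊆ t)
    (heq : EqOn g f (s ∩ u)) (hx : x ∈ s ∩ u) : HasDerivWithinAt g d s x :=
  (hasDerivWithinAt_inter hu).1 (hf.congr_mono heq (heq hx) hst)

def IsSolOn (F : ℝ → ℝ → ℝ) (y₀ : ℝ) (J : Set ℝ) (χ : ℝ → ℝ) : Prop :=
  χ 0 = y₀ ∧ ∀ r ∈ J, HasDerivWithinAt χ (F r (χ r)) J r

variable {F : ℝ → ℝ → ℝ} {y₀ S : ℝ} {J : Set ℝ} {χ : ℝ → ℝ}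

namespace IsSolOn

lemma mono {J' : Set ℝ} (h : IsSolOn F y₀ J χ) (hJ : J' ⊆ J) : IsSolOn F y₀ J' χ :=
  ⟨h.1, fun r hr => (h.2 r (hJ hr)).mono hJ⟩

lemma continuousOn (h : IsSolOn F y₀ J χ) : ContinuousOn χ J :=
  fun r hr => (h.2 r hr).continuousWithinAt

lemma hasDerivWithinAt_Ici (h : IsSolOn F y₀ (Ico 0 S) χ) {t : ℝ} (ht : t ∈ Ico 0 S) :
    HasDerivWithinAt χ (F t (χ t)) (Ici t) t :=
  (h.2 t ht).of_eqOn_inter_nhds (Iio_mem_nhds ht.2)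
    (fun _ hx => ⟨ht.1.trans hx.1, hx.2⟩) (fun _ _ => rfl) ⟨self_mem_Ici, ht.2⟩

lemma hasDerivAt (h : IsSolOn F y₀ (Ico 0 S) χ) {t : ℝ} (ht : t ∈ Ioo 0 S) :
    HasDerivAt χ (F t (χ t)) t :=
  (h.2 t (Ioo_subset_Ico_self ht)).hasDerivAt (Ico_mem_nhds ht.1 ht.2)

end IsSolOn

lemma exists_lipschitzOnWith_Icc (hF : ContDiffOn ℝ 1 (uncurry F) (Ici 0 ×ˢ univ)) (T M : ℝ) :
    ∃ K, ∀ t ∈ Icc 0 T, LipschitzOnWith K (F t) (Icc (-M) M) := by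
  obtain ⟨K, hK⟩ := (hF.mono (prod_mono Icc_subset_Ici_self (subset_univ _))).exists_lipschitzOnWith
    one_ne_zero ((convex_Icc 0 T).prod (convex_Icc (-M) M)) (isCompact_Icc.prod isCompact_Icc)
  refine ⟨K, fun t ht => ?_⟩
  have := hK.comp (LipschitzWith.prodMk_left t).lipschitzOnWith fun y hy => ⟨ht, hy⟩
  rwa [mul_one] at this

lemma eqOn_Icc_of_hasDerivWithinAt (hF : ContDiffOn ℝ 1 (uncurry F) (Ici 0 ×ˢ univ))
    {f g : ℝ → ℝ} {a b : ℝ} (ha : 0 ≤ a)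
    (hf : ContinuousOn f (Icc a b)) (hf' : ∀ t ∈ Ico a b, HasDerivWithinAt f (F t (f t)) (Ici t) t)
    (hg : ContinuousOn g (Icc a b)) (hg' : ∀ t ∈ Ico a b, HasDerivWithinAt g (F t (g t)) (Ici t) t)
    (hfg : f a = g a) : EqOn f g (Icc a b) := by
  obtain ⟨Mf, hMf⟩ := isCompact_Icc.exists_bound_of_continuousOn hf
  obtain ⟨Mg, hMg⟩ := isCompact_Icc.exists_bound_of_continuousOn hg
  obtain ⟨K, hK⟩ := exists_lipschitzOnWith_Icc hF b (max Mf Mg)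
  refine ODE_solution_unique_of_mem_Icc_right (s := fun _ => Icc (-max Mf Mg) (max Mf Mg))
    (fun t ht => hK t ⟨ha.trans ht.1, ht.2.le⟩) hf hf' (fun t ht => ?_) hg hg' (fun t ht => ?_) hfg
  · exact abs_le.1 ((hMf t (Ico_subset_Icc_self ht)).trans (le_max_left _ _))
  · exact abs_le.1 ((hMg t (Ico_subset_Icc_self ht)).trans (le_max_right _ _))

lemma IsSolOn.eqOn (hF : ContDiffOn ℝ 1 (uncurry F) (Ici 0 ×ˢ univ)) {χ₁ χ₂ : ℝ → ℝ}
    (h₁ : IsSolOn F y₀ (Ico 0 S) χ₁) (h₂ : IsSolOn F y₀ (Ico 0 S) χ₂) :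
    EqOn χ₁ χ₂ (Ico 0 S) := fun r hr => by
  have hsub : Icc 0 r ⊆ Ico 0 S := Icc_subset_Ico_right hr.2
  exact eqOn_Icc_of_hasDerivWithinAt hF le_rfl (h₁.continuousOn.mono hsub)
    (fun t ht => h₁.hasDerivWithinAt_Ici (hsub (Ico_subset_Icc_self ht)))
    (h₂.continuousOn.mono hsub)
    (fun t ht => h₂.hasDerivWithinAt_Ici (hsub (Ico_subset_Icc_self ht)))
    (h₁.1.trans h₂.1.symm) ⟨hr.1, le_rfl⟩

lemma exists_forall_exists_hasDerivWithinAt_Icc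
    (hF : ContDiffOn ℝ 1 (uncurry F) (Ici 0 ×ˢ univ)) (T M : ℝ) :
    ∃ δ > 0, ∀ r₁ ∈ Icc 0 T, ∀ y₁ ∈ Icc (-M) M, ∃ f : ℝ → ℝ, f r₁ = y₁ ∧
      ∀ t ∈ Icc r₁ (r₁ + δ), HasDerivWithinAt f (F t (f t)) (Icc r₁ (r₁ + δ)) t := by
  have hbox : Icc 0 (T + 1) ×ˢ Icc (-(M + 1)) (M + 1) ⊆ Ici 0 ×ˢ univ :=
    prod_mono Icc_subset_Ici_self (subset_univ _)
  obtain ⟨C, hC⟩ := (isCompact_Icc.prod isCompact_Icc).exists_bound_of_continuousOn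
    (hF.continuousOn.mono hbox)
  obtain ⟨K, hK⟩ := exists_lipschitzOnWith_Icc hF (T + 1) (M + 1)
  set δ : ℝ := min 1 (1 / ((C.toNNReal : ℝ) + 1))
  have hδ : 0 < δ := lt_min one_pos (by positivity)
  refine ⟨δ, hδ, fun r₁ hr₁ y₁ hy₁ => ?_⟩
  have hball : Metric.closedBall y₁ (1 : NNReal) ⊆ Icc (-(M + 1)) (M + 1) := by
    rw [NNReal.coe_one, Real.closedBall_eq_Icc]
    exact Icc_subset_Icc (by linarith [hy₁.1]) (by linarith [hy₁.2])
  have htime : Icc r₁ (r₁ + δ) ⊆ Icc 0 (T + 1) := Icc_subset_Icc hr₁.1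
    (by linarith [hr₁.2, min_le_left 1 (1 / ((C.toNNReal : ℝ) + 1))])
  have hpl : IsPicardLindelof F (tmin := r₁) (tmax := r₁ + δ) ⟨r₁, le_rfl, by linarith⟩
      y₁ 1 0 C.toNNReal K := by
    refine ⟨fun t ht => (hK t (htime ht)).mono hball, fun y hy => ?_, fun t ht y hy => ?_, ?_⟩
    · exact (hF.continuousOn.comp (continuous_id.prodMk continuous_const).continuousOn
        fun t ht => ⟨(htime ht).1, trivial⟩)
    · exact (hC (t, y) ⟨htime ht, hball hy⟩).trans (Real.le_coe_toNNReal C)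
    · simp only [add_sub_cancel_left, sub_self, max_eq_left hδ.le, NNReal.coe_one,
        NNReal.coe_zero, sub_zero]
      calc (C.toNNReal : ℝ) * δ ≤ C.toNNReal * (1 / (C.toNNReal + 1)) :=
            mul_le_mul_of_nonneg_left (min_le_right _ _) C.toNNReal.2
        _ ≤ 1 := by rw [mul_one_div]; exact div_le_one_of_le₀ (by linarith) (by positivity)
  exact hpl.exists_eq_forall_mem_Icc_hasDerivWithinAt₀

lemma exists_isSolOn_Ico (hF : ContDiffOn ℝ 1 (uncurry F) (Ici 0 ×ˢ univ)) (y₀ : ℝ) :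
    ∃ S > 0, ∃ χ, IsSolOn F y₀ (Ico 0 S) χ := by
  obtain ⟨δ, hδ, hex⟩ := exists_forall_exists_hasDerivWithinAt_Icc hF 0 |y₀|
  obtain ⟨f, hf0, hf⟩ := hex 0 ⟨le_rfl, le_rfl⟩ y₀ (abs_le.1 le_rfl)
  rw [zero_add] at hf
  exact ⟨δ, hδ, f, hf0, fun r hr => (hf r (Ico_subset_Icc_self hr)).mono Ico_subset_Icc_self⟩

/-- Restart at a time `r₁ > S - δ`, where `δ` is a uniform existence time for initial data in
`[0, S] × [-M, M]`, and glue. -/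
lemma IsSolOn.exists_extension (hF : ContDiffOn ℝ 1 (uncurry F) (Ici 0 ×ˢ univ))
    (h : IsSolOn F y₀ (Ico 0 S) χ) (hS : 0 < S) {M : ℝ} (hM : ∀ r ∈ Ico 0 S, |χ r| ≤ M) :
    ∃ S' > S, ∃ χ', IsSolOn F y₀ (Ico 0 S') χ' := by
  obtain ⟨δ, hδ, hex⟩ := exists_forall_exists_hasDerivWithinAt_Icc hF S M
  set r₁ := max 0 (S - δ / 2)
  have hr₁ : r₁ ∈ Ico 0 S := ⟨le_max_left _ _, max_lt hS (by linarith)⟩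
  obtain ⟨f, hf₁, hf⟩ := hex r₁ ⟨hr₁.1, hr₁.2.le⟩ (χ r₁) (abs_le.1 (hM r₁ hr₁))
  have hSS' : S < r₁ + δ := by linarith [le_max_right 0 (S - δ / 2)]
  have hagree : EqOn χ f (Ico r₁ S) := fun ρ hρ => by
    have hsub : Icc r₁ ρ ⊆ Icc r₁ (r₁ + δ) := Icc_subset_Icc_right (by linarith [hρ.2])
    refine eqOn_Icc_of_hasDerivWithinAt hF hr₁.1
      (h.continuousOn.mono (Icc_subset_Ico hr₁.1 hρ.2))
      (fun t ht => h.hasDerivWithinAt_Ici ⟨hr₁.1.trans ht.1, ht.2.trans hρ.2⟩)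
      (fun t ht => (hf t (hsub ht)).continuousWithinAt.mono hsub) (fun t ht => ?_) hf₁.symm
      ⟨hρ.1, le_rfl⟩
    have ht' : t < r₁ + δ := by linarith [ht.2, hρ.2]
    exact (hf t ⟨ht.1, ht'.le⟩).of_eqOn_inter_nhds (Iio_mem_nhds ht')
      (fun x hx => ⟨ht.1.trans hx.1, hx.2.le⟩) (fun _ _ => rfl) ⟨self_mem_Ici, ht'⟩
  set g : ℝ → ℝ := fun r => if r < S then χ r else f r
  have hgχ : EqOn g χ (Ico 0 S) := fun r hr => if_pos hr.2
  have hgf : EqOn g f (Ico r₁ (r₁ + δ)) := fun r hr => by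
    by_cases hrS : r < S
    · exact (if_pos hrS).trans (hagree ⟨hr.1, hrS⟩)
    · exact if_neg hrS
  refine ⟨r₁ + δ, hSS', g, (hgχ ⟨le_rfl, hS⟩).trans h.1, fun r hr => ?_⟩
  rcases lt_or_ge r S with hrS | hrS
  · rw [hgχ ⟨hr.1, hrS⟩]
    exact (h.2 r ⟨hr.1, hrS⟩).of_eqOn_inter_nhds (Iio_mem_nhds hrS)
      (fun x hx => ⟨hx.1.1, hx.2⟩) (fun x hx => hgχ ⟨hx.1.1, hx.2⟩) ⟨hr, hrS⟩
  · have hr₁r : r₁ < r := hr₁.2.trans_le hrS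
    rw [hgf ⟨hr₁r.le, hr.2⟩]
    exact (hf r ⟨hr₁r.le, hr.2.le⟩).of_eqOn_inter_nhds (Ioi_mem_nhds hr₁r)
      (fun x hx => ⟨hx.2.le, hx.1.2.le⟩) (fun x hx => hgf ⟨hx.2.le, hx.1.2⟩) ⟨hr, hr₁r⟩

open Classical in
/-- Solutions on intervals `[0, S)` agree where both are defined, so this is their union
(and `0` beyond). -/
noncomputable def maximalSol (F : ℝ → ℝ → ℝ) (y₀ r : ℝ) : ℝ :=
  if h : ∃ p : ℝ × (ℝ → ℝ), IsSolOn F y₀ (Ico 0 p.1) p.2 ∧ r ∈ Ico 0 p.1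
  then h.choose.2 r else 0

lemma IsSolOn.maximalSol_eq (hF : ContDiffOn ℝ 1 (uncurry F) (Ici 0 ×ˢ univ))
    (h : IsSolOn F y₀ (Ico 0 S) χ) {r : ℝ} (hr : r ∈ Ico 0 S) : maximalSol F y₀ r = χ r := by
  have hex : ∃ p : ℝ × (ℝ → ℝ), IsSolOn F y₀ (Ico 0 p.1) p.2 ∧ r ∈ Ico 0 p.1 := ⟨(S, χ), h, hr⟩
  rw [maximalSol, dif_pos hex]
  obtain ⟨hsol, hrS⟩ := hex.choose_spec
  exact (hsol.mono (Ico_subset_Ico_right (min_le_left _ S))).eqOn hF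
    (h.mono (Ico_subset_Ico_right (min_le_right _ S))) ⟨hr.1, lt_min hrS.2 hr.2⟩

lemma isSolOn_maximalSol (hF : ContDiffOn ℝ 1 (uncurry F) (Ici 0 ×ˢ univ))
    (hJ : J ⊆ Ici 0) (h0 : 0 ∈ J) (hsol : ∀ r ∈ J, ∃ S > r, ∃ χ, IsSolOn F y₀ (Ico 0 S) χ) :
    IsSolOn F y₀ J (maximalSol F y₀) := by
  refine ⟨?_, fun r hr => ?_⟩
  · obtain ⟨S, hS, χ, hχ⟩ := hsol 0 h0
    exact (hχ.maximalSol_eq hF ⟨le_rfl, hS⟩).trans hχ.1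
  · obtain ⟨S, hrS, χ, hχ⟩ := hsol r hr
    rw [hχ.maximalSol_eq hF ⟨hJ hr, hrS⟩]
    exact (hχ.2 r ⟨hJ hr, hrS⟩).of_eqOn_inter_nhds (Iio_mem_nhds hrS)
      (fun x hx => ⟨hJ hx.1, hx.2⟩) (fun x hx => hχ.maximalSol_eq hF ⟨hJ hx.1, hx.2⟩) ⟨hr, hrS⟩

theorem exists_maximal_isSolOn (hF : ContDiffOn ℝ 1 (uncurry F) (Ici 0 ×ˢ univ))
    (hbdd : BddAbove {S | ∃ χ, IsSolOn F y₀ (Ico 0 S) χ}) :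
    ∃ R > 0, ∃ ψ, IsSolOn F y₀ (Ico 0 R) ψ ∧ (∀ S χ, IsSolOn F y₀ (Ico 0 S) χ → S ≤ R) ∧
      ∀ M, ∃ r ∈ Ico 0 R, M < |ψ r| := by
  obtain ⟨S₀, hS₀, χ₀, hχ₀⟩ := exists_isSolOn_Ico hF y₀
  have hne : {S | ∃ χ, IsSolOn F y₀ (Ico 0 S) χ}.Nonempty := ⟨S₀, χ₀, hχ₀⟩
  set R := sSup {S | ∃ χ, IsSolOn F y₀ (Ico 0 S) χ}
  have hR : 0 < R := hS₀.trans_le (le_csSup hbdd ⟨χ₀, hχ₀⟩)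
  have hψ : IsSolOn F y₀ (Ico 0 R) (maximalSol F y₀) :=
    isSolOn_maximalSol hF (fun _ hr => hr.1) ⟨le_rfl, hR⟩ fun r hr => by
      obtain ⟨S, ⟨χ, hχ⟩, hrS⟩ := exists_lt_of_lt_csSup hne hr.2
      exact ⟨S, hrS, χ, hχ⟩
  refine ⟨R, hR, _, hψ, fun S χ hχ => le_csSup hbdd ⟨χ, hχ⟩, fun M => ?_⟩
  by_contra! hM
  obtain ⟨S', hS', χ', hχ'⟩ := hψ.exists_extension hF hR hM
  exact hS'.not_ge (le_csSup hbdd ⟨χ', hχ'⟩)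

theorem exists_isSolOn_Ici (hF : ContDiffOn ℝ 1 (uncurry F) (Ici 0 ×ˢ univ))
    (hbdd : ∀ S χ, IsSolOn F y₀ (Ico 0 S) χ → ∃ M, ∀ r ∈ Ico 0 S, |χ r| ≤ M) :
    ∃ ψ, IsSolOn F y₀ (Ici 0) ψ := by
  have hunb : ¬BddAbove {S | ∃ χ, IsSolOn F y₀ (Ico 0 S) χ} := fun h => by
    obtain ⟨R, -, ψ, hψ, -, hblow⟩ := exists_maximal_isSolOn hF h
    obtain ⟨M, hM⟩ := hbdd R ψ hψ
    obtain ⟨r, hr, hMr⟩ := hblow M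
    exact hMr.not_ge (hM r hr)
  refine ⟨_, isSolOn_maximalSol hF subset_rfl self_mem_Ici fun r _ => ?_⟩
  obtain ⟨S, ⟨χ, hχ⟩, hrS⟩ := not_bddAbove_iff.1 hunb r
  exact ⟨S, hrS, χ, hχ⟩

lemma pos_of_deriv_pos_of_eq_zero {f f' : ℝ → ℝ} {S : ℝ}
    (hf : ∀ x ∈ Ico 0 S, HasDerivWithinAt f (f' x) (Ico 0 S) x) (h0 : 0 ≤ f 0)
    (hzero : ∀ x ∈ Ico 0 S, f x = 0 → 0 < f' x) : ∀ x ∈ Ioo 0 S, 0 < f x := by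
  have hnonneg : ∀ x ∈ Ico 0 S, 0 ≤ f x := fun x hx => by
    have hsub : Icc 0 x ⊆ Ico 0 S := Icc_subset_Ico_right hx.2
    have := image_le_of_deriv_right_lt_deriv_boundary' (f := -f) (B := 0) (B' := 0)
      (fun y hy => (hf y (hsub hy)).continuousWithinAt.neg.mono hsub)
      (fun y hy => ((hf y (hsub (Ico_subset_Icc_self hy))).neg).of_eqOn_inter_nhds
        (Iio_mem_nhds (hy.2.trans hx.2)) (fun z hz => ⟨hy.1.trans hz.1, hz.2⟩)
        (fun _ _ => rfl) ⟨self_mem_Ici, hy.2.trans hx.2⟩)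
      (by simpa using h0) continuousOn_const (fun _ _ => hasDerivWithinAt_const _ _ _)
      (fun y hy hfy => by simpa using hzero y (hsub (Ico_subset_Icc_self hy)) (by simpa using hfy))
      ⟨hx.1, le_rfl⟩
    simpa using this
  intro x hx
  refine (hnonneg x (Ioo_subset_Ico_self hx)).lt_of_ne fun hfx => (hzero x
    (Ioo_subset_Ico_self hx) hfx.symm).ne' ?_
  have hmin : IsLocalMin f x := Filter.mem_of_superset (Ico_mem_nhds hx.1 hx.2)
    fun y hy => hfx ▸ hnonneg y hy
  exact hmin.hasDerivAt_eq_zero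
    ((hf x (Ioo_subset_Ico_self hx)).hasDerivAt (Ico_mem_nhds hx.1 hx.2))

lemma tendsto_nhdsLT_atTop_of_monotoneOn {f : ℝ → ℝ} {a R : ℝ} (hf : MonotoneOn f (Ico a R))
    (hunb : ∀ M, ∃ r ∈ Ico a R, M < f r) : Tendsto f (𝓝[<] R) atTop :=
  tendsto_atTop.2 fun M => by
    obtain ⟨r, hr, hMr⟩ := hunb M
    filter_upwards [Ioo_mem_nhdsLT hr.2] with x hx
    exact hMr.le.trans (hf hr ⟨hr.1.trans hx.1.le, hx.2⟩ hx.1.le)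

lemma hasDerivAt_div_sqrt_one_add_sq (y : ℝ) :
    HasDerivAt (fun y => y / √(1 + y ^ 2)) (1 / √(1 + y ^ 2) ^ 3) y := by
  have hpos : 0 < 1 + y ^ 2 := by positivity
  have hs : HasDerivAt (fun y => √(1 + y ^ 2)) (2 * y / (2 * √(1 + y ^ 2))) y := by
    simpa using ((hasDerivAt_pow 2 y).const_add 1).sqrt hpos.ne'
  refine ((hasDerivAt_id y).div hs (Real.sqrt_pos.2 hpos).ne').congr_deriv ?_
  have hsq := Real.sq_sqrt hpos.le
  have hne := (Real.sqrt_pos.2 hpos).ne'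
  field_simp
  simp only [id]
  nlinarith [hsq]

lemma div_sqrt_one_add_sq_lt_one (y : ℝ) : y / √(1 + y ^ 2) < 1 := by
  rw [div_lt_one (by positivity)]
  calc y ≤ |y| := le_abs_self y
    _ = √(y ^ 2) := (Real.sqrt_sq_eq_abs y).symm
    _ < √(1 + y ^ 2) := Real.sqrt_lt_sqrt (sq_nonneg y) (by linarith)

lemma sq_le_of_div_sqrt_one_add_sq_le {y θ : ℝ} (hy : 0 ≤ y) (hθ : θ < 1)
    (h : y / √(1 + y ^ 2) ≤ θ) : y ^ 2 ≤ θ ^ 2 / (1 - θ ^ 2) := by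
  have hs : 0 < √(1 + y ^ 2) := by positivity
  have hθ0 : 0 ≤ θ := (div_nonneg hy hs.le).trans h
  have hyθ : y ^ 2 ≤ θ ^ 2 * (1 + y ^ 2) := by
    rw [← Real.sq_sqrt (by positivity : (0 : ℝ) ≤ 1 + y ^ 2), ← mul_pow]
    exact pow_le_pow_left₀ hy ((div_le_iff₀ hs).1 h) 2
  rw [le_div_iff₀ (by nlinarith)]
  linarith

noncomputable def regField (N : ℕ) (α b c ε : ℝ) (r y : ℝ) : ℝ :=
  (1 + y ^ 2) * ((c / √(1 + y ^ 2) - b) ^ (1 / α) * √(1 + y ^ 2)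
    - (((N : ℝ) - 1) / (r + ε)) * y)

section RegField

variable {N : ℕ} {α b c ε : ℝ} {ψ ψ' : ℝ → ℝ}

lemma isRegSolOn_iff : IsRegSolOn N α b c ε J ψ ψ' ↔
    IsSolOn (regField N α b c ε) 0 J ψ ∧ EqOn ψ' (fun r => regField N α b c ε r (ψ r)) J := by
  constructor
  · rintro ⟨h0, hd, he⟩
    exact ⟨⟨h0, fun r hr => (hd r hr).congr_deriv (he r hr)⟩, he⟩
  · rintro ⟨⟨h0, hd⟩, he⟩
    exact ⟨h0, fun r hr => (hd r hr).congr_deriv (he hr).symm, he⟩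

lemma regField_zero (r : ℝ) : regField N α b c ε r 0 = (c - b) ^ (1 / α) := by
  simp [regField]

lemma div_sqrt_one_add_sq_sub_pos (hb : b ≤ 0) (hc : 0 < c) (y : ℝ) : 0 < c / √(1 + y ^ 2) - b := by
  have : 0 < c / √(1 + y ^ 2) := by positivity
  linarith

lemma contDiffAt_regField (hb : b ≤ 0) (hc : 0 < c) {p : ℝ × ℝ} (hp : p.1 + ε ≠ 0) :
    ContDiffAt ℝ 1 (uncurry (regField N α b c ε)) p := by
  have hs : 1 + p.2 ^ 2 ≠ 0 := by positivity
  have hsq : √(1 + p.2 ^ 2) ≠ 0 := by positivity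
  have hbase := (div_sqrt_one_add_sq_sub_pos hb hc p.2).ne'
  unfold regField uncurry
  fun_prop (disch := assumption)

lemma contDiffOn_regField (hb : b ≤ 0) (hc : 0 < c) (hε : 0 < ε) :
    ContDiffOn ℝ 1 (uncurry (regField N α b c ε)) (Ici 0 ×ˢ univ) := fun p hp =>
  (contDiffAt_regField hb hc (by linarith [mem_Ici.1 hp.1] : p.1 + ε ≠ 0)).contDiffWithinAt

namespace IsSolOn

lemma pos (hb : b ≤ 0) (hc : 0 < c) (h : IsSolOn (regField N α b c ε) 0 (Ico 0 S) ψ) :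
    ∀ r ∈ Ioo 0 S, 0 < ψ r :=
  pos_of_deriv_pos_of_eq_zero h.2 h.1.ge fun x _ hx => by
    rw [hx, regField_zero]
    exact Real.rpow_pos_of_pos (by linarith) _

lemma nonneg (hb : b ≤ 0) (hc : 0 < c) (h : IsSolOn (regField N α b c ε) 0 (Ico 0 S) ψ) :
    ∀ r ∈ Ico 0 S, 0 ≤ ψ r := fun r hr => by
  rcases hr.1.eq_or_lt with rfl | hr0
  · exact h.1.ge
  · exact (h.pos hb hc r ⟨hr0, hr.2⟩).le

end IsSolOn

lemma hasDerivWithinAt_regField_comp (hb : b ≤ 0) (hc : 0 < c) {s : Set ℝ} {t d : ℝ}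
    (ht : t + ε ≠ 0) (hψ : HasDerivWithinAt ψ d s t) :
    HasDerivWithinAt (fun r => regField N α b c ε r (ψ r))
      (fderiv ℝ (uncurry (regField N α b c ε)) (t, ψ t) (1, d)) s t := by
  have hL := ((contDiffAt_regField (N := N) (α := α) hb hc (p := (t, ψ t)) ht).differentiableAt
    one_ne_zero).hasFDerivAt
  exact hL.comp_hasDerivWithinAt t ((hasDerivWithinAt_id t s).prodMk hψ)

lemma fderiv_regField_apply_one_zero (hb : b ≤ 0) (hc : 0 < c) {t : ℝ} (ht : t + ε ≠ 0)
    (y : ℝ) : fderiv ℝ (uncurry (regField N α b c ε)) (t, y) (1, 0) =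
      ((N : ℝ) - 1) / (t + ε) ^ 2 * ((1 + y ^ 2) * y) := by
  have hL := ((contDiffAt_regField (N := N) (α := α) hb hc (p := (t, y)) ht).differentiableAt
    one_ne_zero).hasFDerivAt
  have hpartial : HasDerivAt (fun r => regField N α b c ε r y)
      (fderiv ℝ (uncurry (regField N α b c ε)) (t, y) (1, 0)) t := by
    exact hL.comp_hasDerivAt t ((hasDerivAt_id t).prodMk (hasDerivAt_const t y))
  have hk := (hasDerivAt_const t ((N : ℝ) - 1)).div ((hasDerivAt_id t).add_const ε) ht
  have hexplicit : HasDerivAt (fun r => regField N α b c ε r y)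
      (((N : ℝ) - 1) / (t + ε) ^ 2 * ((1 + y ^ 2) * y)) t := by
    refine (((hk.mul_const y).const_sub _).const_mul (1 + y ^ 2)).congr_deriv ?_
    simp only [id]
    ring
  exact hpartial.unique hexplicit

lemma IsSolOn.regField_pos (hN : 1 < N) (hb : b ≤ 0) (hc : 0 < c) (hε : 0 < ε)
    (h : IsSolOn (regField N α b c ε) 0 (Ico 0 S) ψ) :
    ∀ r ∈ Ioo 0 S, 0 < regField N α b c ε r (ψ r) := by
  have hN' : (1 : ℝ) < N := by exact_mod_cast hN
  refine pos_of_deriv_pos_of_eq_zero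
    (fun x hx => hasDerivWithinAt_regField_comp hb hc (by linarith [hx.1]) (h.2 x hx))
    (by rw [h.1, regField_zero]; exact Real.rpow_nonneg (by linarith) _) fun x hx hx0 => ?_
  rw [hx0, fderiv_regField_apply_one_zero hb hc (by linarith [hx.1])]
  rcases hx.1.eq_or_lt with rfl | hx1
  · rw [h.1, regField_zero] at hx0
    exact absurd hx0 (Real.rpow_pos_of_pos (by linarith) _).ne'
  · have := h.pos hb hc x ⟨hx1, hx.2⟩
    have : 0 < x + ε := by linarith
    have : (0 : ℝ) < N - 1 := by linarith
    positivity

lemma IsSolOn.strictMonoOn (hN : 1 < N) (hb : b ≤ 0) (hc : 0 < c) (hε : 0 < ε)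
    (h : IsSolOn (regField N α b c ε) 0 (Ico 0 S) ψ) : StrictMonoOn ψ (Ico 0 S) :=
  strictMonoOn_of_deriv_pos (convex_Ico 0 S) h.continuousOn fun x hx => by
    rw [interior_Ico] at hx
    rw [(h.hasDerivAt hx).deriv]
    exact h.regField_pos hN hb hc hε x hx

lemma regField_div_sqrt_pow_three (t y : ℝ) :
    regField N α b c ε t y / √(1 + y ^ 2) ^ 3 =
      (c / √(1 + y ^ 2) - b) ^ (1 / α) - ((N : ℝ) - 1) / (t + ε) * (y / √(1 + y ^ 2)) := by
  have hpos : 0 < 1 + y ^ 2 := by positivity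
  have hne := (Real.sqrt_pos.2 hpos).ne'
  rw [regField, show √(1 + y ^ 2) ^ 3 = √(1 + y ^ 2) ^ 2 * √(1 + y ^ 2) by ring,
    Real.sq_sqrt hpos.le]
  field_simp

lemma IsSolOn.hasDerivWithinAt_div_sqrt (h : IsSolOn (regField N α b c ε) 0 (Ico 0 S) ψ) {t : ℝ}
    (ht : t ∈ Ico 0 S) :
    HasDerivWithinAt (fun r => ψ r / √(1 + ψ r ^ 2))
      ((c / √(1 + ψ t ^ 2) - b) ^ (1 / α) - ((N : ℝ) - 1) / (t + ε) * (ψ t / √(1 + ψ t ^ 2)))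
      (Ici t) t := by
  rw [← regField_div_sqrt_pow_three]
  exact ((hasDerivAt_div_sqrt_one_add_sq (ψ t)).comp_hasDerivWithinAt t
    (h.hasDerivWithinAt_Ici ht)).congr_deriv (by ring)

lemma IsSolOn.continuousOn_div_sqrt (h : IsSolOn F y₀ J ψ) :
    ContinuousOn (fun r => ψ r / √(1 + ψ r ^ 2)) J :=
  h.continuousOn.div ((h.continuousOn.pow 2).const_add 1).sqrt fun _ _ => by positivity

namespace IsSolOn

lemma div_sqrt_le (hN : 1 ≤ N) (hα : 0 < α) (hb : b ≤ 0) (hc : 0 < c) (hε : 0 < ε)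
    (h : IsSolOn (regField N α b c ε) 0 (Ico 0 S) ψ) :
    ∀ r ∈ Ico 0 S, ψ r / √(1 + ψ r ^ 2) ≤ (c - b) ^ (1 / α) * r := fun r hr => by
  have hN' : (1 : ℝ) ≤ N := by exact_mod_cast hN
  have hsub : Icc 0 r ⊆ Ico 0 S := Icc_subset_Ico_right hr.2
  refine image_le_of_deriv_right_le_deriv_boundary (h.continuousOn_div_sqrt.mono hsub)
    (fun t ht => h.hasDerivWithinAt_div_sqrt (hsub (Ico_subset_Icc_self ht))) (by simp [h.1])
    (continuousOn_const.mul continuousOn_id)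
    (fun t _ => ((hasDerivAt_id t).const_mul _).hasDerivWithinAt) (fun t ht => ?_) ⟨hr.1, le_rfl⟩
  have ht := hsub (Ico_subset_Icc_self ht)
  have hs : 1 ≤ √(1 + ψ t ^ 2) := Real.one_le_sqrt.2 (by nlinarith)
  have hA : (c / √(1 + ψ t ^ 2) - b) ^ (1 / α) ≤ (c - b) ^ (1 / α) :=
    Real.rpow_le_rpow (div_sqrt_one_add_sq_sub_pos hb hc _).le
      (by linarith [div_le_self hc.le hs]) (by positivity)
  have hdamp : 0 ≤ ((N : ℝ) - 1) / (t + ε) * (ψ t / √(1 + ψ t ^ 2)) := by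
    have := h.nonneg hb hc t ht
    have : 0 < t + ε := by linarith [ht.1]
    have : (0 : ℝ) ≤ N - 1 := by linarith
    positivity
  simp only [mul_one]
  linarith

lemma mul_div_le_div_sqrt (hN : 1 < N) (hα : 0 < α) (hb : b < 0) (hc : 0 < c) (hε : 0 < ε)
    (h : IsSolOn (regField N α b c ε) 0 (Ico 0 S) ψ) :
    ∀ r ∈ Ico 0 S, (-b) ^ (1 / α) * r / N ≤ ψ r / √(1 + ψ r ^ 2) := fun r hr => by
  have hN' : (1 : ℝ) < N := by exact_mod_cast hN
  have ha : 0 < (-b) ^ (1 / α) := Real.rpow_pos_of_pos (by linarith) _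
  have hsub : Icc 0 r ⊆ Ico 0 S := Icc_subset_Ico_right hr.2
  refine image_le_of_deriv_right_lt_deriv_boundary' (f' := fun _ => (-b) ^ (1 / α) / N)
    ((continuousOn_const.mul continuousOn_id).div_const _)
    (fun t _ => (((hasDerivAt_id t).const_mul _).div_const _).hasDerivWithinAt.congr_deriv
      (by ring)) (by simp [h.1]) (h.continuousOn_div_sqrt.mono hsub)
    (fun t ht => h.hasDerivWithinAt_div_sqrt (hsub (Ico_subset_Icc_self ht)))
    (fun t ht hw => ?_) ⟨hr.1, le_rfl⟩
  have hε' : 0 < t + ε := by linarith [ht.1]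
  have hA : (-b) ^ (1 / α) ≤ (c / √(1 + ψ t ^ 2) - b) ^ (1 / α) :=
    Real.rpow_le_rpow (by linarith) (by linarith [div_pos hc (by positivity : 0 < √(1 + ψ t ^ 2))])
      (by positivity)
  have hdamp : ((N : ℝ) - 1) / (t + ε) * ((-b) ^ (1 / α) * t / N) <
      (-b) ^ (1 / α) * ((N - 1) / N) := by
    rw [show ((N : ℝ) - 1) / (t + ε) * ((-b) ^ (1 / α) * t / N) =
      (-b) ^ (1 / α) * ((N - 1) / N) * (t / (t + ε)) by field_simp]
    have : (0 : ℝ) < N - 1 := by linarith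
    exact mul_lt_of_lt_one_right (by positivity) ((div_lt_one hε').2 (by linarith))
  have hsplit : (-b) ^ (1 / α) / N = (-b) ^ (1 / α) - (-b) ^ (1 / α) * ((N - 1) / N) := by
    field_simp; ring
  simp only [Pi.mul_apply, id] at hw
  rw [← hw, hsplit]
  linarith

lemma le_mul_rpow (hN : 1 < N) (hα : 0 < α) (hb : b < 0) (hc : 0 < c) (hε : 0 < ε)
    (h : IsSolOn (regField N α b c ε) 0 (Ico 0 S) ψ) : S ≤ N * (-b) ^ (-(1 / α)) := by
  by_contra! hS
  have hr : (N : ℝ) * (-b) ^ (-(1 / α)) ∈ Ico 0 S :=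
    ⟨mul_nonneg (Nat.cast_nonneg _) (Real.rpow_nonneg (by linarith) _), hS⟩
  have hone : (-b) ^ (1 / α) * (N * (-b) ^ (-(1 / α))) / N = 1 := by
    have : (0 : ℝ) < N := by exact_mod_cast (zero_lt_one.trans hN)
    have := (Real.rpow_pos_of_pos (by linarith : 0 < -b) (1 / α)).ne'
    rw [Real.rpow_neg (by linarith)]
    field_simp
  have := h.mul_div_le_div_sqrt hN hα hb hc hε _ hr
  rw [hone] at this
  exact this.not_gt (div_sqrt_one_add_sq_lt_one _)

lemma exists_abs_le_of_lt_rpow (hN : 1 ≤ N) (hα : 0 < α) (hb : b ≤ 0) (hc : 0 < c) (hε : 0 < ε)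
    (h : IsSolOn (regField N α b c ε) 0 (Ico 0 S) ψ) (hS : S < (c - b) ^ (-(1 / α))) :
    ∃ M, ∀ r ∈ Ico 0 S, |ψ r| ≤ M := by
  have hcb : 0 < c - b := by linarith
  have hq : 0 < (c - b) ^ (1 / α) := Real.rpow_pos_of_pos hcb _
  have hθ : (c - b) ^ (1 / α) * S < 1 := by
    calc (c - b) ^ (1 / α) * S < (c - b) ^ (1 / α) * (c - b) ^ (-(1 / α)) :=
          mul_lt_mul_of_pos_left hS hq
      _ = 1 := by rw [← Real.rpow_add hcb, add_neg_cancel, Real.rpow_zero]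
  refine ⟨√(((c - b) ^ (1 / α) * S) ^ 2 / (1 - ((c - b) ^ (1 / α) * S) ^ 2)), fun r hr => ?_⟩
  refine Real.abs_le_sqrt (sq_le_of_div_sqrt_one_add_sq_le (h.nonneg hb hc r hr) hθ ?_)
  exact (h.div_sqrt_le hN hα hb hc hε r hr).trans (mul_le_mul_of_nonneg_left hr.2.le hq.le)

lemma tendsto_atTop (hN : 1 < N) (hb : b ≤ 0) (hc : 0 < c) (hε : 0 < ε)
    (h : IsSolOn (regField N α b c ε) 0 (Ico 0 S) ψ) (hunb : ∀ M, ∃ r ∈ Ico 0 S, M < |ψ r|) :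
    Tendsto ψ (𝓝[<] S) atTop :=
  tendsto_nhdsLT_atTop_of_monotoneOn (h.strictMonoOn hN hb hc hε).monotoneOn fun M =>
    (hunb M).imp fun r ⟨hr, hM⟩ => ⟨hr, by rwa [abs_of_nonneg (h.nonneg hb hc r hr)] at hM⟩

end IsSolOn

lemma exists_regField_neg (hN : 1 < N) (hα : 0 < α) (hε : 0 < ε) (S : ℝ) :
    ∃ M ≥ 0, ∀ t ∈ Ico 0 S, regField N α 0 c ε t M < 0 := by
  have hN' : (1 : ℝ) < N := by exact_mod_cast hN
  have hlim : Tendsto (fun M : ℝ => (c / √(1 + M ^ 2)) ^ (1 / α)) atTop (𝓝 0) := by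
    have hs : Tendsto (fun M : ℝ => √(1 + M ^ 2)) atTop atTop :=
      Real.tendsto_sqrt_atTop.comp
        (tendsto_atTop_add_const_left _ 1 (tendsto_pow_atTop two_ne_zero))
    have := (tendsto_const_nhds (x := c)).div_atTop hs |>.rpow_const (p := 1 / α)
      (Or.inr (by positivity))
    rwa [Real.zero_rpow (by positivity)] at this
  set κ := ((N : ℝ) - 1) / (|S| + ε)
  have hκ : 0 < κ := div_pos (by linarith) (by positivity)
  obtain ⟨M, hMκ, hM1⟩ :=
    ((hlim.eventually (gt_mem_nhds (half_pos hκ))).and (eventually_ge_atTop 1)).exists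
  refine ⟨M, by linarith, fun t ht => ?_⟩
  have hs : √(1 + M ^ 2) ≤ 2 * M := (Real.sqrt_le_left (by linarith)).2 (by nlinarith)
  have hk : κ ≤ ((N : ℝ) - 1) / (t + ε) :=
    div_le_div_of_nonneg_left (by linarith) (by linarith [ht.1])
      (by linarith [ht.2, le_abs_self S])
  have hdrive : (c / √(1 + M ^ 2)) ^ (1 / α) * √(1 + M ^ 2) < κ * M := by
    calc (c / √(1 + M ^ 2)) ^ (1 / α) * √(1 + M ^ 2) < κ / 2 * √(1 + M ^ 2) :=
          mul_lt_mul_of_pos_right hMκ (by positivity)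
      _ ≤ κ / 2 * (2 * M) := mul_le_mul_of_nonneg_left hs (by positivity)
      _ = κ * M := by ring
  rw [regField, sub_zero]
  exact mul_neg_of_pos_of_neg (by positivity)
    (by nlinarith [mul_le_mul_of_nonneg_right hk (by linarith : (0 : ℝ) ≤ M)])

lemma IsSolOn.exists_abs_le_of_b_eq_zero (hN : 1 < N) (hα : 0 < α) (hc : 0 < c) (hε : 0 < ε)
    (h : IsSolOn (regField N α 0 c ε) 0 (Ico 0 S) ψ) : ∃ M, ∀ r ∈ Ico 0 S, |ψ r| ≤ M := by
  obtain ⟨M, hM0, hM⟩ := exists_regField_neg hN hα hε S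
  refine ⟨M, fun r hr => abs_le.2 ⟨by linarith [h.nonneg le_rfl hc r hr], ?_⟩⟩
  have hsub : Icc 0 r ⊆ Ico 0 S := Icc_subset_Ico_right hr.2
  exact image_le_of_deriv_right_lt_deriv_boundary' (B' := 0) (h.continuousOn.mono hsub)
    (fun t ht => h.hasDerivWithinAt_Ici (hsub (Ico_subset_Icc_self ht))) (by rw [h.1]; exact hM0)
    continuousOn_const (fun _ _ => hasDerivWithinAt_const _ _ _)
    (fun t ht hψt => by rw [hψt]; exact hM t (hsub (Ico_subset_Icc_self ht))) ⟨hr.1, le_rfl⟩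

end RegField

/-- the ε-regularized problem has a unique solution `ψ_ε` on a maximal
existence interval, positive with positive derivative; the interval is `[0, ∞)` when
`b = 0`, while for `b < 0` its endpoint `R` satisfies
`(c−b)^{−1/α} ≤ R ≤ (−b)^{−1/α}(N + ln 2)` and `ψ_ε → ∞` at `R⁻`. -/
theorem stmt6 (N : ℕ) (hN : 1 < N) (α b c ε : ℝ) (hα : 0 < α) (hb : b ≤ 0)
    (hc : 0 < c) (hε : 0 < ε) :
    (b = 0 → ∃ ψ ψ' : ℝ → ℝ,
      IsRegSolOn N α b c ε (Set.Ici 0) ψ ψ' ∧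
      (∀ (S : ℝ) (χ χ' : ℝ → ℝ), 0 < S →
        IsRegSolOn N α b c ε (Set.Ico 0 S) χ χ' → Set.EqOn χ ψ (Set.Ico 0 S)) ∧
      (∀ r : ℝ, 0 < r → 0 < ψ r ∧ 0 < ψ' r)) ∧
    (b < 0 → ∃ (R : ℝ) (ψ ψ' : ℝ → ℝ),
      0 < R ∧ IsRegSolOn N α b c ε (Set.Ico 0 R) ψ ψ' ∧
      (∀ (S : ℝ) (χ χ' : ℝ → ℝ), 0 < S →
        IsRegSolOn N α b c ε (Set.Ico 0 S) χ χ' →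
        S ≤ R ∧ Set.EqOn χ ψ (Set.Ico 0 S)) ∧
      (∀ r ∈ Set.Ioo (0 : ℝ) R, 0 < ψ r ∧ 0 < ψ' r) ∧
      (c - b) ^ (-(1 / α)) ≤ R ∧ R ≤ (-b) ^ (-(1 / α)) * ((N : ℝ) + Real.log 2) ∧
      Filter.Tendsto ψ (nhdsWithin R (Set.Iio R)) Filter.atTop) := by
  have hF := contDiffOn_regField (N := N) (α := α) hb hc hε
  refine ⟨fun hb0 => ?_, fun hb' => ?_⟩
  · subst hb0
    obtain ⟨ψ, hψ⟩ := exists_isSolOn_Ici hF fun S χ hχ =>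
      hχ.exists_abs_le_of_b_eq_zero hN hα hc hε
    refine ⟨ψ, _, isRegSolOn_iff.2 ⟨hψ, fun _ _ => rfl⟩, fun S χ χ' _ hχ =>
      (isRegSolOn_iff.1 hχ).1.eqOn hF (hψ.mono Ico_subset_Ici_self), fun r hr => ?_⟩
    have hψr : IsSolOn _ 0 (Ico 0 (r + 1)) ψ := hψ.mono Ico_subset_Ici_self
    exact ⟨hψr.pos le_rfl hc r ⟨hr, by linarith⟩,
      hψr.regField_pos hN le_rfl hc hε r ⟨hr, by linarith⟩⟩
  · obtain ⟨R, hR, ψ, hψ, hmax, hblow⟩ := exists_maximal_isSolOn hF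
      ⟨_, fun S ⟨χ, hχ⟩ => hχ.le_mul_rpow hN hα hb' hc hε⟩
    refine ⟨R, ψ, _, hR, isRegSolOn_iff.2 ⟨hψ, fun _ _ => rfl⟩, fun S χ χ' _ hχ => ?_,
      fun r hr => ⟨hψ.pos hb hc r hr, hψ.regField_pos hN hb hc hε r hr⟩, ?_, ?_,
      hψ.tendsto_atTop hN hb hc hε hblow⟩
    · have hSR := hmax S χ (isRegSolOn_iff.1 hχ).1
      exact ⟨hSR, (isRegSolOn_iff.1 hχ).1.eqOn hF (hψ.mono (Ico_subset_Ico_right hSR))⟩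
    · by_contra! hRlt
      obtain ⟨M, hM⟩ := hψ.exists_abs_le_of_lt_rpow hN.le hα hb hc hε hRlt
      obtain ⟨r, hr, hMr⟩ := hblow M
      exact hMr.not_ge (hM r hr)
    · calc R ≤ N * (-b) ^ (-(1 / α)) := hψ.le_mul_rpow hN hα hb' hc hε
        _ ≤ (-b) ^ (-(1 / α)) * ((N : ℝ) + Real.log 2) := by
          rw [mul_comm]
          exact mul_le_mul_of_nonneg_left (by linarith [Real.log_pos one_lt_two])
            (Real.rpow_nonneg (by linarith) _)
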